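/- Let θ > 0 and β ∈ ℝ. Let Z be Gamma-distributed with shape 1/θ and rate 1/θ, and let V₀, V₁ be Exp(1)-distributed, with Z, V₀, V₁ mutually independent. Define T⁰ = (1/θ) log((θ/Z)V₀ + 1) and T¹ = (1/(θ e^β)) log((θ/Z)V₁ + 1). Then for all s, u ≥ 0, the joint survival function satisfies P(T⁰ > s, T¹ > u) = (e^{θs} + e^{θ e^β u} − 1)^{−1/θ}. -/

import Mathlib

/-!
Write `a = (e^{θs} - 1)/θ` and `b = (e^{θ e^β u} - 1)/θ`. On `Z > 0` the events `T⁰ > s` and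
`T¹ > u` are `V₀ > aZ` and `V₁ > bZ`, which given `Z = z` are independent with probabilities
`e^{-az}` and `e^{-bz}`. So the joint survival is the Laplace transform of `Gamma(1/θ, 1/θ)` at
`a + b`, namely `(1 + θ(a + b))^{-1/θ}`, and `1 + θ(a + b) = e^{θs} + e^{θ e^β u} - 1`.
-/

open MeasureTheory ProbabilityTheory Real

lemma gammaMeasure_Iic_zero (a r : ℝ) : gammaMeasure a r (Set.Iic 0) = 0 := by
  rw [gammaMeasure, withDensity_apply _ measurableSet_Iic,
    setLIntegral_congr (Iio_ae_eq_Iic (a := (0 : ℝ))).symm]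
  exact lintegral_gammaPDF_of_nonpos le_rfl

lemma gammaMeasure_ae_pos (a r : ℝ) : ∀ᵐ x ∂gammaMeasure a r, 0 < x := by
  rw [ae_iff]
  simp only [not_lt]
  exact gammaMeasure_Iic_zero a r

lemma expMeasure_Ioi {r t : ℝ} (hr : 0 < r) (ht : 0 ≤ t) :
    expMeasure r (Set.Ioi t) = ENNReal.ofReal (exp (-(r * t))) := by
  have := isProbabilityMeasure_expMeasure hr
  have hexp_le_one : exp (-(r * t)) ≤ 1 := exp_le_one_iff.2 (by nlinarith)
  rw [← Set.compl_Iic, prob_compl_eq_one_sub measurableSet_Iic, ← ofReal_cdf,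
    cdf_expMeasure_eq hr, if_pos ht, ← ENNReal.ofReal_one,
    ← ENNReal.ofReal_sub _ (sub_nonneg.2 hexp_le_one), sub_sub_cancel]

lemma gammaPDFReal_mul_exp_neg_mul {k r c : ℝ} (hr : 0 < r) (hrc : 0 < r + c) (z : ℝ) :
    gammaPDFReal k r z * exp (-(c * z)) = (r / (r + c)) ^ k * gammaPDFReal k (r + c) z := by
  unfold gammaPDFReal
  split_ifs
  · have hexp : exp (-(r * z)) * exp (-(c * z)) = exp (-((r + c) * z)) := by
      rw [← exp_add]; ring_nf
    have hpow : (r + c) ^ k ≠ 0 := (rpow_pos_of_pos hrc k).ne'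
    rw [mul_assoc, hexp, div_rpow hr.le hrc.le]
    field_simp
  · simp

lemma lintegral_exp_neg_mul_gammaMeasure {k r c : ℝ} (hk : 0 < k) (hr : 0 < r) (hrc : 0 < r + c) :
    ∫⁻ z, ENNReal.ofReal (exp (-(c * z))) ∂gammaMeasure k r
      = ENNReal.ofReal ((r / (r + c)) ^ k) := by
  have htilt (z : ℝ) : gammaPDF k r z * ENNReal.ofReal (exp (-(c * z)))
      = ENNReal.ofReal ((r / (r + c)) ^ k) * gammaPDF k (r + c) z := by
    rw [gammaPDF, gammaPDF, ← ENNReal.ofReal_mul (gammaPDFReal_nonneg hk hr z),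
      gammaPDFReal_mul_exp_neg_mul hr hrc, ENNReal.ofReal_mul (by positivity)]
  have hmeas (r' : ℝ) : Measurable (gammaPDF k r') :=
    (measurable_gammaPDFReal k r').ennreal_ofReal
  rw [gammaMeasure, lintegral_withDensity_eq_lintegral_mul _ (hmeas r) (by fun_prop)]
  simp only [Pi.mul_apply, htilt]
  rw [lintegral_const_mul _ (hmeas (r + c)), lintegral_gammaPDF_eq_one hk hrc, mul_one]

lemma map_prodMk_prodMk_eq_prod {Ω β : Type*} [MeasurableSpace Ω] [MeasurableSpace β]
    {μ : Measure Ω} [IsZeroOrProbabilityMeasure μ] {X Y W : Ω → β}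
    (hX : Measurable X) (hY : Measurable Y) (hW : Measurable W) (hindep : iIndepFun ![X, Y, W] μ) :
    μ.map (fun ω ↦ (X ω, (Y ω, W ω))) = (μ.map X).prod ((μ.map Y).prod (μ.map W)) := by
  have hmeas : ∀ i, Measurable (![X, Y, W] i) := by
    intro i; fin_cases i <;> assumption
  have hYW : IndepFun Y W μ := by
    simpa using hindep.indepFun (show (1 : Fin 3) ≠ 2 by decide)
  have hX_YW : IndepFun X (fun ω ↦ (Y ω, W ω)) μ :=
    (by simpa using hindep.indepFun_prodMk hmeas 1 2 0 (by decide) (by decide) :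
      IndepFun (fun ω ↦ (Y ω, W ω)) X μ).symm
  rw [(indepFun_iff_map_prod_eq_prod_map_map hX.aemeasurable
      (hY.prodMk hW).aemeasurable).1 hX_YW,
    (indepFun_iff_map_prod_eq_prod_map_map hY.aemeasurable hW.aemeasurable).1 hYW]

lemma measure_mul_lt_and_mul_lt_eq_lintegral {Ω : Type*} [MeasurableSpace Ω] {μ : Measure Ω}
    [IsZeroOrProbabilityMeasure μ] {Z V₀ V₁ : Ω → ℝ}
    (hZmeas : Measurable Z) (hV₀meas : Measurable V₀) (hV₁meas : Measurable V₁)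
    (hV₀ : μ.map V₀ = expMeasure 1) (hV₁ : μ.map V₁ = expMeasure 1)
    (hindep : iIndepFun ![Z, V₀, V₁] μ) (hZ : ∀ᵐ z ∂μ.map Z, 0 ≤ z) {a b : ℝ}
    (ha : 0 ≤ a) (hb : 0 ≤ b) :
    μ {ω | a * Z ω < V₀ ω ∧ b * Z ω < V₁ ω}
      = ∫⁻ z, ENNReal.ofReal (exp (-((a + b) * z))) ∂μ.map Z := by
  have := isProbabilityMeasure_expMeasure one_pos
  set S : Set (ℝ × ℝ × ℝ) := {p | a * p.1 < p.2.1 ∧ b * p.1 < p.2.2}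
  have hS : MeasurableSet S :=
    (measurableSet_lt (measurable_fst.const_mul a) measurable_snd.fst).inter
      (measurableSet_lt (measurable_fst.const_mul b) measurable_snd.snd)
  have hsection : ∀ᵐ z ∂μ.map Z, ((expMeasure 1).prod (expMeasure 1)) (Prod.mk z ⁻¹' S)
      = ENNReal.ofReal (exp (-((a + b) * z))) := by
    filter_upwards [hZ] with z hz
    have hslice : Prod.mk z ⁻¹' S = Set.Ioi (a * z) ×ˢ Set.Ioi (b * z) := by
      ext; simp [S]
    rw [hslice, Measure.prod_prod, expMeasure_Ioi one_pos (mul_nonneg ha hz),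
      expMeasure_Ioi one_pos (mul_nonneg hb hz), ← ENNReal.ofReal_mul (exp_nonneg _),
      ← exp_add]
    ring_nf
  calc μ {ω | a * Z ω < V₀ ω ∧ b * Z ω < V₁ ω}
      = (μ.map fun ω ↦ (Z ω, (V₀ ω, V₁ ω))) S := by
        rw [Measure.map_apply (by fun_prop) hS]; rfl
    _ = ∫⁻ z, ENNReal.ofReal (exp (-((a + b) * z))) ∂μ.map Z := by
        rw [map_prodMk_prodMk_eq_prod hZmeas hV₀meas hV₁meas hindep, hV₀, hV₁,
          Measure.prod_apply hS, lintegral_congr_ae hsection]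

lemma lt_one_div_mul_log_iff {θ κ z v : ℝ} (c : ℝ) (hθ : 0 < θ) (hκ : 0 < κ) (hz : 0 < z)
    (hv : 0 ≤ v) :
    c < 1 / κ * log (θ / z * v + 1) ↔ (exp (κ * c) - 1) / θ * z < v := by
  rw [one_div_mul_eq_div, lt_div_iff₀ hκ, lt_log_iff_exp_lt (by positivity), mul_comm c κ,
    div_mul_eq_mul_div θ z v, ← sub_lt_iff_lt_add, lt_div_iff₀ hz,
    div_mul_eq_mul_div, div_lt_iff₀ hθ, mul_comm v θ]

/-- With `Z ~ Gamma(1/θ, 1/θ)` and `V₀, V₁ ~ Exp(1)`, `Z, V₀, V₁` mutually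
independent, `T⁰ = (1/θ)log((θ/Z)V₀ + 1)` and `T¹ = (1/(θe^β))log((θ/Z)V₁ + 1)` have
joint survival function `P(T⁰ > s, T¹ > u) = (e^{θs} + e^{θe^β u} − 1)^{−1/θ}`. -/
theorem stmt12 {Ω : Type*} [MeasurableSpace Ω] (μ : Measure Ω) [IsProbabilityMeasure μ]
    (θ β : ℝ) (hθ : 0 < θ)
    (Z V₀ V₁ : Ω → ℝ)
    (hZmeas : Measurable Z) (hV₀meas : Measurable V₀) (hV₁meas : Measurable V₁)
    (hZ : Measure.map Z μ = gammaMeasure (1 / θ) (1 / θ))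
    (hV₀ : Measure.map V₀ μ = expMeasure 1)
    (hV₁ : Measure.map V₁ μ = expMeasure 1)
    (hindep : iIndepFun
      ![Z, V₀, V₁] μ)
    (T0 T1 : Ω → ℝ)
    (hT0 : ∀ ω, T0 ω = (1 / θ) * Real.log ((θ / Z ω) * V₀ ω + 1))
    (hT1 : ∀ ω, T1 ω = (1 / (θ * Real.exp β)) * Real.log ((θ / Z ω) * V₁ ω + 1)) :
    ∀ s u : ℝ, 0 ≤ s → 0 ≤ u →
      μ {ω | s < T0 ω ∧ u < T1 ω}
        = ENNReal.ofReal
            ((Real.exp (θ * s) + Real.exp (θ * Real.exp β * u) - 1) ^ (-(1 / θ))) := by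
  intro s u hs hu
  have he₀ : 1 ≤ exp (θ * s) := one_le_exp (by positivity)
  have he₁ : 1 ≤ exp (θ * exp β * u) := one_le_exp (by positivity)
  have hpos {X : Ω → ℝ} {a r : ℝ} (hX : Measurable X) (h : μ.map X = gammaMeasure a r) :
      ∀ᵐ ω ∂μ, 0 < X ω :=
    ae_of_ae_map hX.aemeasurable (h ▸ gammaMeasure_ae_pos a r)
  have hevent : μ {ω | s < T0 ω ∧ u < T1 ω}
      = μ {ω | (exp (θ * s) - 1) / θ * Z ω < V₀ ω ∧
          (exp (θ * exp β * u) - 1) / θ * Z ω < V₁ ω} := by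
    refine measure_congr (Filter.eventuallyEq_set.2 ?_)
    filter_upwards [hpos hZmeas hZ, hpos hV₀meas hV₀, hpos hV₁meas hV₁] with ω hz h₀ h₁
    rw [hT0, hT1, lt_one_div_mul_log_iff _ hθ hθ hz h₀.le,
      lt_one_div_mul_log_iff (κ := θ * exp β) _ hθ (by positivity) hz h₁.le]
  have hratio : 1 / θ / (1 / θ + ((exp (θ * s) - 1) / θ + (exp (θ * exp β * u) - 1) / θ))
      = (exp (θ * s) + exp (θ * exp β * u) - 1)⁻¹ := by
    rw [← add_div, ← add_div, div_div_div_cancel_right₀ hθ.ne', one_div]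
    ring_nf
  have hsum : 0 < exp (θ * s) + exp (θ * exp β * u) - 1 := by linarith
  rw [hevent, measure_mul_lt_and_mul_lt_eq_lintegral hZmeas hV₀meas hV₁meas hV₀ hV₁ hindep
      (hZ ▸ (gammaMeasure_ae_pos _ _).mono fun _ ↦ le_of_lt) (by bound) (by bound),
    hZ, lintegral_exp_neg_mul_gammaMeasure (by positivity) (by positivity) (by positivity),
    hratio, inv_rpow hsum.le, ← rpow_neg hsum.le]
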